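/- Every row and every column-group permutation sign of an (m,2)-latin quasisquare is such that ε(c) = +1 for all c ∈ LQ(m,2); i.e., the sign function is identically 1 on LQ(m,2). -/

import Mathlib

open Equiv Finset Function

/-- The `r`-th element of the `i`-th block of length `m` in `{0, …, m*n-1}`. -/
def idx (m n : ℕ) (i : Fin n) (r : Fin m) : Fin (m * n) :=
  ⟨i.val * m + r.val, by
    have h1 : i.val * m + m = (i.val + 1) * m := by ring
    have h2 : (i.val + 1) * m ≤ n * m := Nat.mul_le_mul_right m i.isLt
    have h3 : n * m = m * n := Nat.mul_comm n m
    omega⟩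

/-- A permutation of `{0, …, m*n-1}` is block-increasing if it is strictly increasing on
each of the `n` consecutive blocks of length `m`. -/
def BlockIncr (m n : ℕ) (σ : Equiv.Perm (Fin (m * n))) : Prop :=
  ∀ (i : Fin n) (r r' : Fin m), r < r' → σ (idx m n i r) < σ (idx m n i r')

instance (m n : ℕ) : DecidablePred (BlockIncr m n) := fun σ => by
  unfold BlockIncr; infer_instance

/-- The generalized pfaffian `Pf_m` of a tensor with `m*k` indices (grouped in `k` groups of
`m`), each ranging over `{0, …, m*n-1}`:
`(1/n!) Σ ε(σ_1)⋯ε(σ_k) Π_{i=1}^n M_{σ_1((i-1)m+1),…,σ_1(im),…,σ_k((i-1)m+1),…,σ_k(im)}`,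
the sum being over `k`-tuples of block-increasing permutations. -/
noncomputable def Pf (m k n : ℕ) (M : (Fin k → Fin m → Fin (m * n)) → ℚ) : ℚ :=
  (n.factorial : ℚ)⁻¹ *
    ∑ σ ∈ Finset.univ.filter (fun σ : Fin k → Equiv.Perm (Fin (m * n)) =>
        ∀ j, BlockIncr m n (σ j)),
      (∏ j, ((Equiv.Perm.sign (σ j) : ℤ) : ℚ)) *
        ∏ i : Fin n, M (fun j r => σ j (idx m n i r))

/-- The block number of position `t` in `{0, …, m*n-1}`. -/
def blkOf (m n : ℕ) (t : Fin (m * n)) : Fin n :=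
  ⟨t.val / m, Nat.div_lt_of_lt_mul t.isLt⟩

/-- The position within its block of position `t` in `{0, …, m*n-1}`. -/
def posOf (m n : ℕ) (t : Fin (m * n)) : Fin m :=
  ⟨t.val % m, by
    have hm : 0 < m := by
      rcases Nat.eq_zero_or_pos m with h | h
      · exact absurd t.isLt (by simp [h])
      · exact h
    exact Nat.mod_lt _ hm⟩

/-- The Levi-Civita (fully antisymmetric) tensor of order `m*k` and side `m*k`, with
indices grouped in `k` groups of `m`: its value is the sign of the sequence of indices
read as a permutation when the indices are pairwise distinct, and `0` otherwise. -/
noncomputable def levi (m k : ℕ) : (Fin k → Fin m → Fin (m * k)) → ℚ := fun f =>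
  if h : Function.Bijective (fun t : Fin (m * k) => f (blkOf m k t) (posOf m k t)) then
    ((Equiv.Perm.sign (Equiv.ofBijective _ h) : ℤ) : ℚ)
  else 0

/-- The hyperminor of `M` obtained by restricting the `s`-th group of `m` index slots to
the subset `I s` (of cardinality `m*ℓ`), with the induced order. -/
noncomputable def hyperminor {m k n : ℕ} (ℓ : ℕ) (M : (Fin k → Fin m → Fin (m * n)) → ℚ)
    (I : Fin k → Finset (Fin (m * n))) (h : ∀ s, (I s).card = m * ℓ) :
    (Fin k → Fin m → Fin (m * ℓ)) → ℚ :=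
  fun f => M fun j r => (((I j).orderIsoOfFin (h j)) (f j r)).1

/-- Row `ℓ` of the `(m,k)`-array built from column permutations `σ`: the entry in
column-group `j`, position `r` is `σ j ((ℓ-1)m + r)`. -/
def lqRow (m k : ℕ) (σ : Fin k → Equiv.Perm (Fin (m * k))) (ℓ : Fin k) :
    Fin (m * k) → Fin (m * k) :=
  fun t => σ (blkOf m k t) (idx m k ℓ (posOf m k t))

/-- `σ` determines an `(m,k)`-latin quasisquare: every column permutation `σ j` is
block-increasing and every row is a permutation of `{0, …, mk-1}` (each row is then
automatically block-increasing). -/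
def IsLQ (m k : ℕ) (σ : Fin k → Equiv.Perm (Fin (m * k))) : Prop :=
  (∀ j, BlockIncr m k (σ j)) ∧ ∀ ℓ : Fin k, Function.Bijective (lqRow m k σ ℓ)

instance (m k : ℕ) : DecidablePred (IsLQ m k) := fun σ => by
  unfold IsLQ lqRow; infer_instance

/-- The set of `(m,k)`-latin quasisquares. -/
noncomputable def LQ (m k : ℕ) : Finset (Fin k → Equiv.Perm (Fin (m * k))) :=
  Finset.univ.filter (IsLQ m k)

/-- The sign of an `(m,k)`-latin quasisquare: the product of the signs of the column
permutations `σ j` and of the signs of the rows. -/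
noncomputable def LQsign (m k : ℕ) (σ : Fin k → Equiv.Perm (Fin (m * k))) : ℚ :=
  if h : ∀ ℓ : Fin k, Function.Bijective (lqRow m k σ ℓ) then
    (∏ j, ((Equiv.Perm.sign (σ j) : ℤ) : ℚ)) *
      ∏ ℓ, ((Equiv.Perm.sign (Equiv.ofBijective _ (h ℓ)) : ℤ) : ℚ)
  else 0

/-!
For two column groups the rows of a latin quasisquare are its columns. Indeed, the second
block of `σ 0` and the first block of `σ 1` are both increasing enumerations of the complement
of the image of the first block of `σ 0` (by bijectivity of `σ 0` and of the first row,
respectively), hence they agree. Then the sign is `ε(σ 0)² ε(σ 1)² = 1`.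
-/

section Blocks

variable {m n : ℕ}

lemma blkOf_idx (i : Fin n) (r : Fin m) : blkOf m n (idx m n i r) = i := by
  have hm : 0 < m := r.pos
  ext
  simp only [blkOf, idx]
  rw [Nat.add_comm, Nat.add_mul_div_right _ _ hm, Nat.div_eq_of_lt r.isLt, Nat.zero_add]

lemma posOf_idx (i : Fin n) (r : Fin m) : posOf m n (idx m n i r) = r := by
  ext
  simp [posOf, idx, Nat.mod_eq_of_lt r.isLt]

lemma idx_blkOf_posOf (t : Fin (m * n)) : idx m n (blkOf m n t) (posOf m n t) = t := by
  ext
  exact Nat.div_add_mod' t.val m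

lemma mem_range_idx_iff {i : Fin n} {t : Fin (m * n)} :
    t ∈ Set.range (idx m n i) ↔ blkOf m n t = i := by
  constructor
  · rintro ⟨r, rfl⟩
    exact blkOf_idx i r
  · rintro rfl
    exact ⟨posOf m n t, idx_blkOf_posOf t⟩

lemma range_idx_one_eq_compl : Set.range (idx m 2 1) = (Set.range (idx m 2 0))ᶜ := by
  ext t
  simp only [Set.mem_compl_iff, mem_range_idx_iff]
  omega

lemma range_comp_idx_one_eq_compl {β : Type*} {e : Fin (m * 2) → β} (he : Bijective e) :
    Set.range (e ∘ idx m 2 1) = (Set.range (e ∘ idx m 2 0))ᶜ := by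
  rw [Set.range_comp, Set.range_comp, range_idx_one_eq_compl, Set.image_compl_eq he]

lemma BlockIncr.strictMono_comp_idx {σ : Perm (Fin (m * n))} (hσ : BlockIncr m n σ)
    (i : Fin n) : StrictMono (σ ∘ idx m n i) :=
  fun _ _ h => hσ i _ _ h

end Blocks

lemma lqRow_idx {m k : ℕ} (σ : Fin k → Perm (Fin (m * k))) (ℓ j : Fin k) (r : Fin m) :
    lqRow m k σ ℓ (idx m k j r) = σ j (idx m k ℓ r) := by
  simp only [lqRow, blkOf_idx, posOf_idx]

lemma LQsign_eq_one_of_lqRow_eq {m k : ℕ} {σ : Fin k → Perm (Fin (m * k))}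
    (hrow : ∀ ℓ, lqRow m k σ ℓ = σ ℓ) : LQsign m k σ = 1 := by
  have hbij : ∀ ℓ, Bijective (lqRow m k σ ℓ) := fun ℓ => hrow ℓ ▸ (σ ℓ).bijective
  have hperm : ∀ ℓ, Equiv.ofBijective _ (hbij ℓ) = σ ℓ := fun ℓ => Equiv.ext (congrFun (hrow ℓ))
  rw [LQsign, dif_pos hbij]
  simp only [hperm, ← Finset.prod_mul_distrib, ← Int.cast_mul, ← Units.val_mul,
    Int.units_mul_self, Units.val_one, Int.cast_one, Finset.prod_const_one]

namespace IsLQ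

variable {m : ℕ} {σ : Fin 2 → Perm (Fin (m * 2))}

lemma comp_idx_swap (h : IsLQ m 2 σ) : σ 0 ∘ idx m 2 1 = σ 1 ∘ idx m 2 0 := by
  have hrow0 : lqRow m 2 σ 0 ∘ idx m 2 0 = σ 0 ∘ idx m 2 0 := funext (lqRow_idx σ 0 0)
  have hrow1 : lqRow m 2 σ 0 ∘ idx m 2 1 = σ 1 ∘ idx m 2 0 := funext (lqRow_idx σ 0 1)
  refine ((h.1 0).strictMono_comp_idx 1).range_inj ((h.1 1).strictMono_comp_idx 0) |>.mp ?_
  rw [range_comp_idx_one_eq_compl (σ 0).bijective, ← hrow1,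
    range_comp_idx_one_eq_compl (h.2 0), hrow0]

lemma comp_idx_comm (h : IsLQ m 2 σ) (ℓ j : Fin 2) : σ j ∘ idx m 2 ℓ = σ ℓ ∘ idx m 2 j := by
  fin_cases ℓ <;> fin_cases j
  · rfl
  · exact (comp_idx_swap h).symm
  · exact comp_idx_swap h
  · rfl

lemma lqRow_eq (h : IsLQ m 2 σ) (ℓ : Fin 2) : lqRow m 2 σ ℓ = σ ℓ := by
  funext t
  rw [← idx_blkOf_posOf t, lqRow_idx]
  exact congrFun (comp_idx_comm h ℓ _) _

end IsLQ

/-- Every `(m,2)`-latin quasisquare has sign `+1`. -/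
theorem lq_two_sign_eq_one (m : ℕ) :
    ∀ σ ∈ LQ m 2, LQsign m 2 σ = 1 := by
  intro σ hσ
  exact LQsign_eq_one_of_lqRow_eq (mem_filter.mp hσ).2.lqRow_eq
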